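/- For a symmetric friend-oriented hedonic game with k = 1, if there exists a CIS-robust partition, then for every player j in R_w (players outside P_w with no friend outside P_w, having neither exactly one friend outside P_w nor two friends outside P_w ∪ S_w), j has no friend at all, i.e., j is an isolated vertex of the friendship graph. -/

import Mathlib

open Finset

section HedonicDefs

variable {α : Type*} [DecidableEq α] [Fintype α]

/-- Additive utility of player `i` in coalition `S`. -/
def util (w : α → α → ℤ) (S : Finset α) (i : α) : ℤ := ∑ j ∈ S, w i j

/-- `π` is a partition of the player set `V`: every player of `V` lies in its own
coalition, coalitions are contained in `V`, and membership determines the coalition. -/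
def IsPartition (V : Finset α) (π : α → Finset α) : Prop :=
  (∀ i ∈ V, i ∈ π i ∧ π i ⊆ V) ∧ ∀ i ∈ V, ∀ j ∈ π i, π j = π i

/-- `S` is a coalition of the partition `π` on `V`, or the empty coalition. -/
def IsCoalitionOf (V : Finset α) (π : α → Finset α) (S : Finset α) : Prop :=
  S = ∅ ∨ ∃ j ∈ V, S = π j

/-- Player `i` has an NS-deviation from `π i` to `S`. -/
def NSDev (w : α → α → ℤ) (V : Finset α) (π : α → Finset α) (i : α) (S : Finset α) : Prop :=
  IsCoalitionOf V π S ∧ S ≠ π i ∧ i ∉ S ∧ util w (π i) i < util w (insert i S) i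

/-- Player `i` has an IS-deviation from `π i` to `S`: an NS-deviation accepted by
all members of the target coalition `S`. -/
def ISDev (w : α → α → ℤ) (V : Finset α) (π : α → Finset α) (i : α) (S : Finset α) : Prop :=
  NSDev w V π i S ∧ ∀ j ∈ S, util w S j ≤ util w (insert i S) j

/-- Player `i` has a CIS-deviation from `π i` to `S`: an IS-deviation also accepted by
all members of the abandoned coalition. -/
def CISDev (w : α → α → ℤ) (V : Finset α) (π : α → Finset α) (i : α) (S : Finset α) : Prop :=
  ISDev w V π i S ∧ ∀ j ∈ (π i).erase i, util w (π i) j ≤ util w ((π i).erase i) j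

def NashStable (w : α → α → ℤ) (V : Finset α) (π : α → Finset α) : Prop :=
  ∀ i ∈ V, ∀ S : Finset α, ¬ NSDev w V π i S

def IndStable (w : α → α → ℤ) (V : Finset α) (π : α → Finset α) : Prop :=
  ∀ i ∈ V, ∀ S : Finset α, ¬ ISDev w V π i S

def CIStable (w : α → α → ℤ) (V : Finset α) (π : α → Finset α) : Prop :=
  ∀ i ∈ V, ∀ S : Finset α, ¬ CISDev w V π i S

/-- Individual rationality: each player weakly prefers its coalition to being alone
(being alone gives utility `w i i = 0`). -/
def IndRational (w : α → α → ℤ) (V : Finset α) (π : α → Finset α) : Prop :=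
  ∀ i ∈ V, 0 ≤ util w (π i) i

/-- Core stability: no nonempty coalition strongly blocks `π`. -/
def CoreStable (w : α → α → ℤ) (V : Finset α) (π : α → Finset α) : Prop :=
  ¬ ∃ S : Finset α, S ⊆ V ∧ S.Nonempty ∧ ∀ i ∈ S, util w (π i) i < util w S i

/-- `π` is robust for the stability notion `St` under deletion of at most `k` players:
`π` satisfies `St` and so does its truncation after removing any `X` with `|X| ≤ k`. -/
def Robust (St : Finset α → (α → Finset α) → Prop) (V : Finset α)
    (π : α → Finset α) (k : ℕ) : Prop :=
  St V π ∧ ∀ X ⊆ V, X.card ≤ k → St (V \ X) (fun i => π i \ X)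

/-- Symmetric friend-oriented game: symmetric weights, zero on the diagonal, and each
off-diagonal weight equals `n` (friends) or `-1` (enemies), where `n` is the number of players. -/
def FriendOriented (w : α → α → ℤ) : Prop :=
  (∀ i j : α, w i j = w j i) ∧ (∀ i : α, w i i = 0) ∧
    ∀ i j : α, i ≠ j → w i j = (Fintype.card α : ℤ) ∨ w i j = -1

/-- `j` is a friend of `i`. -/
def Friend (w : α → α → ℤ) (i j : α) : Prop := i ≠ j ∧ 0 < w i j


instance (w : α → α → ℤ) (i j : α) : Decidable (Friend w i j) :=
  inferInstanceAs (Decidable (_ ∧ _))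

/-- `S` is a clique of the friendship graph. -/
def IsClique (w : α → α → ℤ) (S : Finset α) : Prop :=
  ∀ i ∈ S, ∀ j ∈ S, i ≠ j → Friend w i j

/-- Two players lie in the same connected component of the friendship graph. -/
def SameComp (w : α → α → ℤ) : α → α → Prop :=
  Relation.ReflTransGen (fun a b => Friend w a b)

/-- The connected component of `v` in the friendship graph, as a set. -/
def comp (w : α → α → ℤ) (v : α) : Set α := {u | SameComp w v u}

end HedonicDefs
section ElimDefs

variable {α : Type*} [DecidableEq α] [Fintype α]

/-- Friendship within the subgame on vertex set `V`. -/
def FriendIn (w : α → α → ℤ) (V : Set α) (i j : α) : Prop :=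
  i ∈ V ∧ j ∈ V ∧ Friend w i j

/-- `j` is the unique friend of `i` in the subgraph induced by `V`. -/
def UniqueFriendIn (w : α → α → ℤ) (V : Set α) (i j : α) : Prop :=
  FriendIn w V i j ∧ ∀ l : α, FriendIn w V i l → l = j

/-- `v` is a leaf (degree-one vertex) of the subgraph induced by `V`. -/
def LeafIn (w : α → α → ℤ) (V : Set α) (v : α) : Prop :=
  v ∈ V ∧ ∃! u : α, FriendIn w V v u

/-- `j` is a pseudo-center of the subgraph induced by `V`:
at most one neighbor of `j` is a non-leaf. -/
def PseudoCenterIn (w : α → α → ℤ) (V : Set α) (j : α) : Prop :=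
  ∀ u u' : α, FriendIn w V j u → ¬ LeafIn w V u →
    FriendIn w V j u' → ¬ LeafIn w V u' → u = u'

/-- Players removed by a list of pairs. -/
def removed (L : List (α × α)) : Set α := {v | ∃ p ∈ L, v = p.1 ∨ v = p.2}

/-- `L` is an outer elimination sequence: at each step `t`, in the graph `G_t` obtained
by deleting all earlier pairs, `j_t` is the unique friend of `i_t` and, moreover,
(E1) `j_t` is a pseudo-center of `G_t`, or (E2) `i_t` is a friend of an earlier-removed player. -/
def IsElimSeq (w : α → α → ℤ) (L : List (α × α)) : Prop :=
  ∀ (t : ℕ) (h : t < L.length),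
    UniqueFriendIn w {v | v ∉ removed (L.take t)} (L.get ⟨t, h⟩).1 (L.get ⟨t, h⟩).2 ∧
      (PseudoCenterIn w {v | v ∉ removed (L.take t)} (L.get ⟨t, h⟩).2 ∨
        ∃ q ∈ removed (L.take t), Friend w (L.get ⟨t, h⟩).1 q)

/-- `{i, j}` is an elimination pair: it appears in some outer elimination sequence. -/
def ElimPair (w : α → α → ℤ) (i j : α) : Prop :=
  ∃ L : List (α × α), IsElimSeq w L ∧ (i, j) ∈ L

/-- `P_w`: the players belonging to some elimination pair. -/
def Pset (w : α → α → ℤ) : Set α :=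
  {v | ∃ i j : α, ElimPair w i j ∧ (v = i ∨ v = j)}

/-- `S_w`: players outside `P_w` with exactly one friend outside `P_w`. -/
def Sset (w : α → α → ℤ) : Set α :=
  {v | v ∉ Pset w ∧ ∃! u : α, u ∉ Pset w ∧ Friend w v u}

/-- `B_w`: players with at least two friends outside `P_w ∪ S_w`. -/
def Bset (w : α → α → ℤ) : Set α :=
  {v | ∃ u u' : α, u ≠ u' ∧ u ∉ Pset w ∪ Sset w ∧ u' ∉ Pset w ∪ Sset w ∧
    Friend w v u ∧ Friend w v u'}

/-- `R_w`: the remaining players. -/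
def Rset (w : α → α → ℤ) : Set α := {v | v ∉ Pset w ∪ Sset w ∪ Bset w}

end ElimDefs

/-!
Fix a CIS-robust partition `π`. Robustness gives three local facts: a member of a coalition of
size at least 2 has a friend in it, of size at least 3 two friends in it, and a singleton player
with a friend `c` outside its coalition finds at least three players in `π c`. Induction along an
elimination sequence then shows that every elimination pair `(i, j)` is a coalition `{i, j}`.
A player `j ∈ R_w` has all its friends in `P_w`: a friend outside `P_w` would give `j` a friend
`s ∈ S_w`, and `(s, j)` would extend a maximal elimination sequence, since such a sequence leaves
no player of `P_w` with a friend (an infinite descent alternating between two sequences). So `j`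
is a singleton, and a friend `u` of `j` would lie in a coalition of two players, contradicting
the third fact.
-/

section FriendOriented

variable {α : Type*} {w : α → α → ℤ}

theorem Friend.symm [Fintype α] (hw : FriendOriented w) {i j : α} (h : Friend w i j) :
    Friend w j i :=
  ⟨h.1.symm, hw.1 i j ▸ h.2⟩

theorem FriendOriented.eq_neg_one_of_not_friend [Fintype α] (hw : FriendOriented w) {i j : α}
    (hij : i ≠ j) (h : ¬ Friend w i j) : w i j = -1 :=
  (hw.2.2 i j hij).resolve_left fun hn =>
    h ⟨hij, hn ▸ Int.natCast_pos.mpr (Fintype.card_pos_iff.mpr ⟨i⟩)⟩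

theorem util_insert_of_notMem [DecidableEq α] {S : Finset α} {i m : α} (h : i ∉ S) :
    util w (insert i S) m = w m i + util w S m :=
  Finset.sum_insert h

theorem util_eq_util_erase_add [DecidableEq α] {S : Finset α} {i m : α} (h : i ∈ S) :
    util w S m = util w (S.erase i) m + w m i :=
  (Finset.sum_erase_add S _ h).symm

theorem util_singleton_self [Fintype α] (hw : FriendOriented w) (i : α) : util w {i} i = 0 := by
  simp [util, hw.2.1]

end FriendOriented

section CIStable

variable {α : Type*} [DecidableEq α] [Fintype α] {w : α → α → ℤ}
  {V : Finset α} {π : α → Finset α} {i : α}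

/-- Otherwise `i` profits from leaving for the empty coalition, and its enemies left behind
are glad to see it go. -/
theorem CIStable.exists_friend_mem (hw : FriendOriented w) (hCIS : CIStable w V π) (hi : i ∈ V)
    (hii : i ∈ π i) (hcard : 1 < (π i).card) : ∃ f ∈ π i, Friend w i f := by
  by_contra! hno
  have henemy : ∀ j ∈ (π i).erase i, w i j = -1 := fun j hj =>
    hw.eq_neg_one_of_not_friend (Finset.ne_of_mem_erase hj).symm
      (hno j (Finset.mem_of_mem_erase hj))
  obtain ⟨o, ho⟩ : ((π i).erase i).Nonempty := by
    rw [← Finset.card_pos, Finset.card_erase_of_mem hii]; omega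
  have hneg : util w (π i) i < 0 := by
    rw [util_eq_util_erase_add hii, hw.2.1, add_zero, util,
      ← Finset.sum_erase_add _ _ ho, henemy o ho]
    have : ∑ j ∈ ((π i).erase i).erase o, w i j ≤ 0 :=
      Finset.sum_nonpos fun j hj => (henemy j (Finset.mem_of_mem_erase hj)).le.trans (by norm_num)
    omega
  refine hCIS i hi ∅
    ⟨⟨⟨Or.inl rfl, fun h => by simp [← h] at hii, by simp, ?_⟩, by simp⟩, ?_⟩
  · rwa [insert_empty_eq, util_singleton_self hw]
  · intro j hj
    rw [util_eq_util_erase_add hii, hw.1, henemy j hj]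
    omega

/-- Otherwise the singleton `i` joins `π m`, welcomed by all of its members. -/
theorem CIStable.exists_not_friend_mem (hw : FriendOriented w) (hCIS : CIStable w V π)
    (hi : i ∈ V) (hsing : π i = {i}) {m f : α} (hm : m ∈ V) (him : i ∉ π m)
    (hf : f ∈ π m) (hif : Friend w i f) : ∃ e ∈ π m, ¬ Friend w i e := by
  by_contra! hall
  refine hCIS i hi (π m)
    ⟨⟨⟨Or.inr ⟨m, hm, rfl⟩, fun h => ?_, him, ?_⟩, fun j hj => ?_⟩, ?_⟩
  · rw [h, hsing, Finset.mem_singleton] at hf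
    exact hif.1 hf.symm
  · rw [hsing, util_singleton_self hw, util_insert_of_notMem him, hw.2.1, zero_add]
    exact Finset.sum_pos (fun e he => (hall e he).2) ⟨f, hf⟩
  · rw [util_insert_of_notMem him]
    linarith [((hall j hj).symm hw).2]
  · simp [hsing]

end CIStable

section Partition

variable {α : Type*} {V : Finset α} {π : α → Finset α} {i : α}

theorem IsPartition.mem_self (hP : IsPartition V π) (hi : i ∈ V) : i ∈ π i :=
  (hP.1 i hi).1

theorem IsPartition.subset (hP : IsPartition V π) (hi : i ∈ V) : π i ⊆ V :=
  (hP.1 i hi).2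

theorem IsPartition.eq_of_mem (hP : IsPartition V π) (hi : i ∈ V) {j : α} (hj : j ∈ π i) :
    π j = π i :=
  hP.2 i hi j hj

end Partition

section RobustPartition

variable {α : Type*} [DecidableEq α] [Fintype α] {w : α → α → ℤ}
  {V : Finset α} {π : α → Finset α} {i : α}

theorem IsPartition.eq_singleton_of_forall_not_friend (hw : FriendOriented w)
    (hP : IsPartition V π) (hCIS : CIStable w V π) (hi : i ∈ V)
    (hno : ∀ f ∈ π i, ¬ Friend w i f) : π i = {i} := by
  refine Finset.eq_singleton_iff_unique_mem.mpr ⟨hP.mem_self hi, fun m hm => ?_⟩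
  by_contra hmi
  obtain ⟨f, hf, hif⟩ := hCIS.exists_friend_mem hw hi (hP.mem_self hi)
    (Finset.one_lt_card.mpr ⟨m, hm, i, hP.mem_self hi, hmi⟩)
  exact hno f hf hif

/-- After deleting the only friend `f` of `i` in its coalition, `i` would be left among enemies. -/
theorem IsPartition.exists_two_friends_mem (hw : FriendOriented w) (hP : IsPartition V π)
    (hR : Robust (CIStable w) V π 1) (hi : i ∈ V) (hcard : 2 < (π i).card) :
    ∃ f ∈ π i, ∃ g ∈ π i, f ≠ g ∧ Friend w i f ∧ Friend w i g := by
  have hii := hP.mem_self hi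
  obtain ⟨f, hf, hif⟩ := hR.1.exists_friend_mem hw hi hii (by omega)
  have hCIS : CIStable w (V \ {f}) (fun v => π v \ {f}) :=
    hR.2 {f} (Finset.singleton_subset_iff.mpr (hP.subset hi hf)) (by simp)
  have hcard' : 1 < (π i \ {f}).card := by
    rw [Finset.sdiff_singleton_eq_erase, Finset.card_erase_of_mem hf]; omega
  obtain ⟨g, hg, hig⟩ :=
    hCIS.exists_friend_mem hw (by simp [hi, hif.1]) (by simp [hii, hif.1]) hcard'
  rw [Finset.mem_sdiff, Finset.mem_singleton] at hg
  exact ⟨f, hf, g, hg.1, Ne.symm hg.2, hif, hig⟩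

/-- A singleton `i` is kept out of the coalition of its friend `c` only by two enemies in it:
one blocks the move, and the move is still blocked once that one is deleted. -/
theorem IsPartition.two_lt_card_of_friend (hw : FriendOriented w) (hP : IsPartition V π)
    (hR : Robust (CIStable w) V π 1) (hi : i ∈ V) (hsing : π i = {i}) {c : α} (hc : c ∈ V)
    (hic : i ∉ π c) (hfr : Friend w i c) : 2 < (π c).card := by
  have hcc := hP.mem_self hc
  obtain ⟨e, he, hie⟩ := hR.1.exists_not_friend_mem hw hi hsing hc hic hcc hfr
  have hce : c ≠ e := fun h => hie (h ▸ hfr)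
  have hei : e ≠ i := fun h => hic (h ▸ he)
  have hCIS : CIStable w (V \ {e}) (fun v => π v \ {e}) :=
    hR.2 {e} (Finset.singleton_subset_iff.mpr (hP.subset hc he)) (by simp)
  obtain ⟨e', he', hie'⟩ := hCIS.exists_not_friend_mem hw (i := i) (m := c) (f := c)
    (by simp [hi, hei.symm]) (by simp [hsing, hei.symm]) (by simp [hc, hce])
    (by simp [hic]) (by simp [hcc, hce]) hfr
  rw [Finset.mem_sdiff, Finset.mem_singleton] at he'
  exact Finset.two_lt_card.mpr
    ⟨c, hcc, e, he, e', he'.1, hce, fun h => hie' (h ▸ hfr), Ne.symm he'.2⟩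

end RobustPartition

section ElimSeq

variable {α : Type*} {w : α → α → ℤ} {L L' LT : List (α × α)}

def ElimStep (w : α → α → ℤ) (L : List (α × α)) (i j : α) : Prop :=
  UniqueFriendIn w {v | v ∉ removed L} i j ∧
    (PseudoCenterIn w {v | v ∉ removed L} j ∨ ∃ q ∈ removed L, Friend w i q)

def IsMaximalElimSeq (w : α → α → ℤ) (L : List (α × α)) : Prop :=
  IsElimSeq w L ∧ ∀ i j, ¬ ElimStep w L i j

theorem mem_removed_iff_getElem {v : α} :
    v ∈ removed L ↔ ∃ (t : ℕ) (h : t < L.length), v = L[t].1 ∨ v = L[t].2 := by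
  simp only [removed, Set.mem_ofPred_eq, List.mem_iff_getElem]
  constructor
  · rintro ⟨_, ⟨t, h, rfl⟩, hv⟩
    exact ⟨t, h, hv⟩
  · rintro ⟨t, h, hv⟩
    exact ⟨_, ⟨t, h, rfl⟩, hv⟩

theorem mem_removed_take_iff {v : α} {k : ℕ} :
    v ∈ removed (L.take k) ↔
      ∃ (t : ℕ) (h : t < L.length), t < k ∧ (v = L[t].1 ∨ v = L[t].2) := by
  rw [mem_removed_iff_getElem]
  constructor
  · rintro ⟨t, h, hv⟩
    rw [List.length_take, lt_min_iff] at h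
    exact ⟨t, h.2, h.1, by simpa using hv⟩
  · rintro ⟨t, h, htk, hv⟩
    exact ⟨t, by simp [htk, h], by simpa using hv⟩

theorem removed_take_mono {k k' : ℕ} (h : k ≤ k') :
    removed (L.take k) ⊆ removed (L.take k') := fun _ hv => by
  obtain ⟨t, ht, htk, hv⟩ := mem_removed_take_iff.mp hv
  exact mem_removed_take_iff.mpr ⟨t, ht, by omega, hv⟩

theorem removed_take_subset (k : ℕ) : removed (L.take k) ⊆ removed L :=
  fun _ ⟨p, hp, hv⟩ => ⟨p, List.mem_of_mem_take hp, hv⟩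

theorem removed_append : removed (L ++ L') = removed L ∪ removed L' := by
  ext v
  simp only [removed, List.mem_append, Set.mem_union, Set.mem_ofPred_eq]
  grind

theorem isElimSeq_nil : IsElimSeq w ([] : List (α × α)) :=
  fun _ h => absurd h (Nat.not_lt_zero _)

theorem isElimSeq_append_singleton_iff {i j : α} :
    IsElimSeq w (L ++ [(i, j)]) ↔ IsElimSeq w L ∧ ElimStep w L i j := by
  constructor
  · intro h
    refine ⟨fun t ht => ?_, ?_⟩
    · have := h t (by simp; omega)
      simpa [List.take_append_of_le_length ht.le, List.getElem_append_left ht] using this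
    · simpa [ElimStep] using h L.length (by simp)
  · rintro ⟨hL, hs⟩ t ht
    rw [List.length_append, List.length_singleton] at ht
    rcases Nat.lt_succ_iff_lt_or_eq.mp ht with ht | rfl
    · simpa [List.take_append_of_le_length ht.le, List.getElem_append_left ht] using hL t ht
    · simpa [ElimStep] using hs

theorem IsElimSeq.uniqueFriendIn (hL : IsElimSeq w L) {t : ℕ} (h : t < L.length) :
    UniqueFriendIn w {v | v ∉ removed (L.take t)} L[t].1 L[t].2 :=
  (hL t h).1

theorem IsElimSeq.uniqueFriendIn_of_getElem_eq (hL : IsElimSeq w L) {t : ℕ} (h : t < L.length)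
    {a b : α} (hab : L[t] = (a, b)) : UniqueFriendIn w {v | v ∉ removed (L.take t)} a b :=
  by simpa only [hab] using hL.uniqueFriendIn h

/-- The first member of a pair has no friend left once the pair is removed. -/
theorem IsElimSeq.exists_getElem_eq_of_friend_not_removed (hL : IsElimSeq w L) {t : ℕ}
    (h : t < L.length) {v c : α} (hv : v = L[t].1 ∨ v = L[t].2) (hvc : Friend w v c)
    (hc : c ∉ removed (L.take (t + 1))) : ∃ u, L[t] = (u, v) := by
  refine ⟨L[t].1, Prod.ext rfl ?_⟩
  rcases hv with rfl | rfl
  · obtain ⟨⟨hv, -, -⟩, huniq⟩ := hL.uniqueFriendIn h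
    have hcv := huniq c ⟨hv, fun h' => hc (removed_take_mono (by omega) h'), hvc⟩
    exact absurd (mem_removed_take_iff.mpr ⟨t, h, by omega, Or.inr hcv⟩) hc
  · rfl

def ElimSeqAbsorbs (w : α → α → ℤ) (LT L : List (α × α)) : Prop :=
  ∀ v ∈ removed L, v ∉ removed LT → ∀ u, Friend w v u → u ∈ removed LT

theorem ElimSeqAbsorbs.notMem_removed (hA : ElimSeqAbsorbs w LT L) {x y : α}
    (hx : x ∉ removed LT) (hy : y ∉ removed LT) (hxy : Friend w x y) : x ∉ removed L :=
  fun hxL => hy (hA x hxL hx y hxy)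

theorem IsElimSeq.removed_subset_Pset (hL : IsElimSeq w L) : removed L ⊆ Pset w :=
  fun _ ⟨p, hp, hv⟩ => ⟨p.1, p.2, ⟨L, hL, hp⟩, hv⟩

theorem mem_Pset_iff {v : α} : v ∈ Pset w ↔ ∃ L, IsElimSeq w L ∧ v ∈ removed L := by
  constructor
  · rintro ⟨i, j, ⟨L, hL, hij⟩, hv⟩
    exact ⟨L, hL, (i, j), hij, hv⟩
  · rintro ⟨L, hL, hv⟩
    exact hL.removed_subset_Pset hv

theorem exists_friend_mem_Sset_of_mem_Rset {j u : α} (hj : j ∈ Rset w) (hju : Friend w j u)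
    (hu : u ∉ Pset w) : ∃ s ∈ Sset w, Friend w j s := by
  have hjP : j ∉ Pset w := fun h => hj (Or.inl (Or.inl h))
  obtain ⟨u', ⟨hu', hju'⟩, hne⟩ :
      ∃ u', (u' ∉ Pset w ∧ Friend w j u') ∧ u' ≠ u := by
    by_contra! h
    exact hj (Or.inl (Or.inr ⟨hjP, u, ⟨hu, hju⟩, fun y hy => h y hy⟩))
  by_contra! hS
  exact hj (Or.inr ⟨u, u', hne.symm, fun h => h.elim hu (hS u · hju),
    fun h => h.elim hu' (hS u' · hju'), hju, hju'⟩)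

end ElimSeq

section Absorption

variable {α : Type*} [Fintype α] {w : α → α → ℤ} {L LT : List (α × α)}

/-- If `c` survived step `k`, alternating between the two sequences would produce a player in
the same situation at a strictly earlier step of `L`: an infinite descent. -/
theorem IsElimSeq.mem_removed_take_of_getElem_eq (hw : FriendOriented w)
    (hLT : IsElimSeq w LT) (hL : IsElimSeq w L) (k : ℕ) (hk : k < L.length) {k' : ℕ}
    (hk' : k' < LT.length) {x c : α} (hx : x = L[k].1 ∨ x = L[k].2) (hxc : LT[k'] = (x, c)) :
    c ∈ removed (L.take (k + 1)) := by
  induction k using Nat.strong_induction_on generalizing k' x c with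
  | _ k ih =>
  by_contra hc
  obtain ⟨⟨hxT, -, hfxc⟩, hcuniq⟩ := hLT.uniqueFriendIn_of_getElem_eq hk' hxc
  obtain ⟨u, hux⟩ := hL.exists_getElem_eq_of_friend_not_removed hk hx hfxc hc
  obtain ⟨⟨huL, -, hfux⟩, hxuniq⟩ := hL.uniqueFriendIn_of_getElem_eq hk hux
  have huk : u ∈ removed (L.take (k + 1)) :=
    mem_removed_take_iff.mpr ⟨k, hk, by omega, Or.inl (by rw [hux])⟩
  have huT : u ∈ removed (LT.take k') := by
    by_contra h
    exact hc (hcuniq u ⟨hxT, h, hfux.symm hw⟩ ▸ huk)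
  obtain ⟨k'', hk'', hk''k', hu⟩ := mem_removed_take_iff.mp huT
  obtain ⟨x', hx'u⟩ := hLT.exists_getElem_eq_of_friend_not_removed hk'' hu hfux
    fun h => hxT (removed_take_mono (by omega) h)
  have hfx'u := (hLT.uniqueFriendIn_of_getElem_eq hk'' hx'u).1.2.2
  have hx'L : x' ∈ removed (L.take k) := by
    by_contra h
    have hx'k' : x' ∈ removed (LT.take k') :=
      mem_removed_take_iff.mpr ⟨k'', hk'', hk''k', Or.inl (by rw [hx'u])⟩
    exact hxT (hxuniq x' ⟨huL, h, hfx'u.symm hw⟩ ▸ hx'k')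
  obtain ⟨k₀, hk₀, hk₀k, hx'⟩ := mem_removed_take_iff.mp hx'L
  exact huL (removed_take_mono (by omega) (ih k₀ hk₀k hk₀ hk'' hx' hx'u))

theorem IsElimSeq.mem_removed_of_uniqueFriendIn (hw : FriendOriented w) (hLT : IsElimSeq w LT)
    (hL : IsElimSeq w L) {a b : α} (hab : UniqueFriendIn w {v | v ∉ removed L} a b)
    (ha : a ∈ removed LT) : b ∈ removed LT := by
  by_contra hb
  obtain ⟨⟨haL, -, hfab⟩, hbuniq⟩ := hab
  obtain ⟨k', hk', ha'⟩ := mem_removed_iff_getElem.mp ha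
  obtain ⟨x, hxa⟩ := hLT.exists_getElem_eq_of_friend_not_removed hk' ha' hfab
    fun h => hb (removed_take_subset _ h)
  have hfxa := (hLT.uniqueFriendIn_of_getElem_eq hk' hxa).1.2.2
  have hxL : x ∈ removed L := by
    by_contra h
    exact hb (hbuniq x ⟨haL, h, hfxa.symm hw⟩ ▸
      mem_removed_iff_getElem.mpr ⟨k', hk', Or.inl (by rw [hxa])⟩)
  obtain ⟨k, hk, hx⟩ := mem_removed_iff_getElem.mp hxL
  exact haL (removed_take_subset _ (hLT.mem_removed_take_of_getElem_eq hw hL k hk hk' hx hxa))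

theorem ElimSeqAbsorbs.leafIn (hw : FriendOriented w) (hA : ElimSeqAbsorbs w LT L) {u b : α}
    (hu : u ∉ removed LT) (hb : b ∉ removed LT) (hub : Friend w u b)
    (hleaf : LeafIn w {v | v ∉ removed L} u) : LeafIn w {v | v ∉ removed LT} u := by
  obtain ⟨huL, f, -, hfuniq⟩ := hleaf
  have hbf := hfuniq b ⟨huL, hA.notMem_removed hb hu (hub.symm hw), hub⟩
  refine ⟨hu, b, ⟨hu, hb, hub⟩, fun l ⟨_, hl, hul⟩ => ?_⟩
  exact (hfuniq l ⟨huL, hA.notMem_removed hl hu (hul.symm hw), hul⟩).trans hbf.symm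

theorem ElimSeqAbsorbs.elimStep (hw : FriendOriented w) (hA : ElimSeqAbsorbs w LT L) {a b : α}
    (hs : ElimStep w L a b) (ha : a ∉ removed LT) (hb : b ∉ removed LT) :
    ElimStep w LT a b := by
  obtain ⟨⟨⟨haL, hbL, hab⟩, hbuniq⟩, hE⟩ := hs
  refine ⟨⟨⟨ha, hb, hab⟩, fun l ⟨_, hl, hal⟩ =>
    hbuniq l ⟨haL, hA.notMem_removed hl ha (hal.symm hw), hal⟩⟩, ?_⟩
  rcases hE with hPC | ⟨q, hq, haq⟩
  · refine Or.inl fun u u' ⟨_, hu, hbu⟩ hnl ⟨_, hu', hbu'⟩ hnl' => hPC u u'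
      ⟨hbL, hA.notMem_removed hu hb (hbu.symm hw), hbu⟩ (fun h => hnl ?_)
      ⟨hbL, hA.notMem_removed hu' hb (hbu'.symm hw), hbu'⟩ (fun h => hnl' ?_)
    · exact hA.leafIn hw hu hb (hbu.symm hw) h
    · exact hA.leafIn hw hu' hb (hbu'.symm hw) h
  · exact Or.inr ⟨q, by_contra fun hqT => ha (hA q hq hqT a (haq.symm hw)), haq⟩

theorem IsMaximalElimSeq.absorbs (hw : FriendOriented w) (hLT : IsMaximalElimSeq w LT)
    (hL : IsElimSeq w L) : ElimSeqAbsorbs w LT L := by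
  induction L using List.reverseRecOn with
  | nil => exact fun v ⟨_, hp, _⟩ => absurd hp List.not_mem_nil
  | append_singleton L p ih =>
    obtain ⟨a, b⟩ := p
    obtain ⟨hL, hs⟩ := isElimSeq_append_singleton_iff.mp hL
    have hA := ih hL
    intro v hv hvT u hvu
    rw [removed_append] at hv
    rcases hv with hv | ⟨_, hp, hv⟩
    · exact hA v hv hvT u hvu
    rw [List.mem_singleton] at hp
    subst hp
    by_cases hbT : b ∈ removed LT
    · obtain rfl : v = a := hv.resolve_right fun h => hvT (h ▸ hbT)
      by_contra huT
      exact huT (hs.1.2 u ⟨hs.1.1.1, hA.notMem_removed huT hvT (hvu.symm hw), hvu⟩ ▸ hbT)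
    · have haT : a ∉ removed LT := fun ha =>
        hbT (hLT.1.mem_removed_of_uniqueFriendIn hw hL hs.1 ha)
      exact absurd (hA.elimStep hw hs haT hbT) (hLT.2 a b)

end Absorption

section Classes

variable {α : Type*} [Fintype α] {w : α → α → ℤ} {L LT : List (α × α)}

theorem exists_isMaximalElimSeq (w : α → α → ℤ) : ∃ L, IsMaximalElimSeq w L := by
  by_contra! h
  simp only [IsMaximalElimSeq, not_and, not_forall, not_not] at h
  have hgrow : ∀ n : ℕ, ∃ L, IsElimSeq w L ∧ n ≤ (removed L).ncard := by
    intro n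
    induction n with
    | zero => exact ⟨[], isElimSeq_nil, Nat.zero_le _⟩
    | succ n ih =>
      obtain ⟨L, hL, hn⟩ := ih
      obtain ⟨i, j, hij⟩ := h L hL
      refine ⟨L ++ [(i, j)], isElimSeq_append_singleton_iff.mpr ⟨hL, hij⟩, ?_⟩
      have hsub : removed L ⊂ removed (L ++ [(i, j)]) := by
        rw [removed_append, Set.ssubset_iff_of_subset Set.subset_union_left]
        exact ⟨i, Or.inr ⟨(i, j), List.mem_singleton_self _, Or.inl rfl⟩, hij.1.1.1⟩
      have := Set.ncard_lt_ncard hsub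
      omega
  obtain ⟨L, -, hL⟩ := hgrow (Nat.card α + 1)
  have := Set.ncard_le_card (removed L)
  omega

theorem IsMaximalElimSeq.friend_mem_removed (hw : FriendOriented w) (hLT : IsMaximalElimSeq w LT)
    {v u : α} (hv : v ∈ Pset w) (hvT : v ∉ removed LT) (hvu : Friend w v u) :
    u ∈ removed LT := by
  obtain ⟨L, hL, hvL⟩ := mem_Pset_iff.mp hv
  exact hLT.absorbs hw hL v hvL hvT u hvu

theorem IsMaximalElimSeq.notMem_Pset (hw : FriendOriented w) (hLT : IsMaximalElimSeq w LT)
    {x y : α} (hx : x ∉ removed LT) (hy : y ∉ removed LT) (hxy : Friend w x y) :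
    y ∉ Pset w :=
  fun hyP => hx (hLT.friend_mem_removed hw hyP hy (hxy.symm hw))

theorem IsMaximalElimSeq.uniqueFriendIn_of_mem_Sset (hw : FriendOriented w)
    (hLT : IsMaximalElimSeq w LT) {s j : α} (hs : s ∈ Sset w) (hj : j ∉ Pset w)
    (hsj : Friend w s j) : UniqueFriendIn w {v | v ∉ removed LT} s j := by
  have halive : ∀ {v}, v ∉ Pset w → v ∉ removed LT :=
    fun hv h => hv (hLT.1.removed_subset_Pset h)
  refine ⟨⟨halive hs.1, halive hj, hsj⟩, fun l ⟨hsT, hl, hsl⟩ => ?_⟩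
  exact hs.2.unique ⟨hLT.notMem_Pset hw hsT hl hsl, hsl⟩ ⟨hj, hsj⟩

theorem IsMaximalElimSeq.pseudoCenterIn (hw : FriendOriented w) (hLT : IsMaximalElimSeq w LT)
    {j : α} (hjP : j ∉ Pset w) (hjB : j ∉ Bset w) :
    PseudoCenterIn w {v | v ∉ removed LT} j := by
  have hcore : ∀ u, FriendIn w {v | v ∉ removed LT} j u →
      ¬ LeafIn w {v | v ∉ removed LT} u → u ∉ Pset w ∪ Sset w := by
    rintro u ⟨hj, hu, hju⟩ hnl (huP | huS)
    · exact hLT.notMem_Pset hw hj hu hju huP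
    · have huj := hLT.uniqueFriendIn_of_mem_Sset hw huS hjP (hju.symm hw)
      exact hnl ⟨hu, j, huj.1, huj.2⟩
  intro u u' hu hnl hu' hnl'
  by_contra hne
  exact hjB ⟨u, u', hne, hcore u hu hnl, hcore u' hu' hnl', hu.2.2, hu'.2.2⟩

/-- A friend `s ∈ S_w` of `j` would be a valid next pair `(s, j)` for a maximal sequence. -/
theorem mem_Pset_of_friend_of_mem_Rset (hw : FriendOriented w) {j u : α} (hj : j ∈ Rset w)
    (hju : Friend w j u) : u ∈ Pset w := by
  by_contra hu
  have hjP : j ∉ Pset w := fun h => hj (Or.inl (Or.inl h))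
  obtain ⟨s, hs, hjs⟩ := exists_friend_mem_Sset_of_mem_Rset hj hju hu
  obtain ⟨LT, hLT⟩ := exists_isMaximalElimSeq w
  exact hLT.2 s j ⟨hLT.uniqueFriendIn_of_mem_Sset hw hs hjP (hjs.symm hw),
    Or.inl (hLT.pseudoCenterIn hw hjP fun h => hj (Or.inr h))⟩

end Classes

section Pairs

variable {α : Type*} [DecidableEq α] [Fintype α] {w : α → α → ℤ} {π : α → Finset α}
  {L : List (α × α)}

theorem coalition_eq_of_mem_removed (hP : IsPartition univ π)
    (hpairs : ∀ p ∈ L, π p.1 = {p.1, p.2}) {f : α} (hf : f ∈ removed L) :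
    ∃ p ∈ L, π f = {p.1, p.2} := by
  obtain ⟨p, hp, hfp⟩ := hf
  refine ⟨p, hp, ?_⟩
  rcases hfp with rfl | rfl
  · exact hpairs p hp
  · have h2 : p.2 ∈ π p.1 := by simp [hpairs p hp]
    rw [hP.eq_of_mem (mem_univ _) h2, hpairs p hp]

theorem mem_removed_of_mem_coalition (hP : IsPartition univ π)
    (hpairs : ∀ p ∈ L, π p.1 = {p.1, p.2}) {f m : α} (hf : f ∈ removed L)
    (hm : m ∈ π f) : m ∈ removed L := by
  obtain ⟨p, hp, hpf⟩ := coalition_eq_of_mem_removed hP hpairs hf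
  rw [hpf, Finset.mem_insert, Finset.mem_singleton] at hm
  exact ⟨p, hp, hm⟩

theorem card_coalition_le_two_of_mem_removed (hP : IsPartition univ π)
    (hpairs : ∀ p ∈ L, π p.1 = {p.1, p.2}) {f : α} (hf : f ∈ removed L) :
    (π f).card ≤ 2 := by
  obtain ⟨p, -, hpf⟩ := coalition_eq_of_mem_removed hP hpairs hf
  rw [hpf]
  exact Finset.card_le_two

/-- If `a` has a friend in its coalition, it is `c`, and a third member would give `a` a second
one. Otherwise `a` is a singleton and the coalition of its friend `c` (E1) or `q` (E2) has at least
three members: but `π q` is an earlier pair, and every member of `π c` has two friends in it, so `c`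
would have two neighbours that are not leaves. -/
theorem coalition_eq_pair_of_elimStep (hw : FriendOriented w) (hP : IsPartition univ π)
    (hR : Robust (CIStable w) univ π 1) (hpairs : ∀ p ∈ L, π p.1 = {p.1, p.2}) {a c : α}
    (hs : ElimStep w L a c) : π a = {a, c} := by
  obtain ⟨⟨⟨ha, hc, hac⟩, hcuniq⟩, hE⟩ := hs
  have halive : ∀ x ∉ removed L, ∀ m ∈ π x, m ∉ removed L := fun x hx m hm hmL =>
    hx (mem_removed_of_mem_coalition hP hpairs hmL
      (by rw [hP.eq_of_mem (mem_univ x) hm]; exact hP.mem_self (mem_univ x)))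
  by_cases hint : ∃ f ∈ π a, Friend w a f
  · have hfc : ∀ g ∈ π a, Friend w a g → g = c := fun g hg hag =>
      hcuniq g ⟨ha, halive a ha g hg, hag⟩
    obtain ⟨f, hf, haf⟩ := hint
    have hsub : {a, c} ⊆ π a := Finset.insert_subset_iff.mpr
      ⟨hP.mem_self (mem_univ a), Finset.singleton_subset_iff.mpr (hfc f hf haf ▸ hf)⟩
    refine (Finset.eq_of_subset_of_card_le hsub ?_).symm
    by_contra! hcard
    rw [Finset.card_pair hac.1] at hcard
    obtain ⟨g, hg, g', hg', hne, hag, hag'⟩ :=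
      hP.exists_two_friends_mem hw hR (mem_univ a) hcard
    exact hne ((hfc g hg hag).trans (hfc g' hg' hag').symm)
  push Not at hint
  have hsing := hP.eq_singleton_of_forall_not_friend hw hR.1 (mem_univ a) hint
  have hnotin : ∀ {x}, x ≠ a → a ∉ π x := fun {x} hxa hax => by
    have hx := hP.mem_self (mem_univ x)
    rw [← hP.eq_of_mem (mem_univ x) hax, hsing, Finset.mem_singleton] at hx
    exact hxa hx
  rcases hE with hPC | ⟨q, hq, haq⟩
  · have hcard := hP.two_lt_card_of_friend hw hR (mem_univ a) hsing (mem_univ c)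
      (hnotin hac.1.symm) hac
    have hnonleaf : ∀ p ∈ π c, ¬ LeafIn w {v | v ∉ removed L} p := fun p hp hleaf => by
      rw [← hP.eq_of_mem (mem_univ c) hp] at hcard
      obtain ⟨g, hg, g', hg', hne, hpg, hpg'⟩ :=
        hP.exists_two_friends_mem hw hR (mem_univ p) hcard
      exact hne (hleaf.2.unique ⟨hleaf.1, halive p hleaf.1 g hg, hpg⟩
        ⟨hleaf.1, halive p hleaf.1 g' hg', hpg'⟩)
    obtain ⟨g, hg, g', hg', hne, hcg, hcg'⟩ :=
      hP.exists_two_friends_mem hw hR (mem_univ c) hcard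
    exact (hne (hPC g g' ⟨hc, halive c hc g hg, hcg⟩ (hnonleaf g hg)
      ⟨hc, halive c hc g' hg', hcg'⟩ (hnonleaf g' hg'))).elim
  · have hqa : q ≠ a := fun h => ha (h ▸ hq)
    exact ((hP.two_lt_card_of_friend hw hR (mem_univ a) hsing (mem_univ q) (hnotin hqa) haq).not_ge
      (card_coalition_le_two_of_mem_removed hP hpairs hq)).elim

theorem IsElimSeq.coalition_eq_pair (hw : FriendOriented w) (hP : IsPartition univ π)
    (hR : Robust (CIStable w) univ π 1) (hL : IsElimSeq w L) :
    ∀ p ∈ L, π p.1 = {p.1, p.2} := by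
  induction L using List.reverseRecOn with
  | nil => simp
  | append_singleton L q ih =>
    obtain ⟨hL, hs⟩ := isElimSeq_append_singleton_iff.mp hL
    intro p hp
    rcases List.mem_append.mp hp with hp | hp
    · exact ih hL p hp
    · rw [List.mem_singleton.mp hp]
      exact coalition_eq_pair_of_elimStep hw hP hR (ih hL) hs

theorem IsPartition.mem_Pset_of_mem_coalition (hw : FriendOriented w) (hP : IsPartition univ π)
    (hR : Robust (CIStable w) univ π 1) {v m : α} (hv : v ∈ Pset w) (hm : m ∈ π v) :
    m ∈ Pset w := by
  obtain ⟨L, hL, hvL⟩ := mem_Pset_iff.mp hv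
  exact hL.removed_subset_Pset
    (mem_removed_of_mem_coalition hP (hL.coalition_eq_pair hw hP hR) hvL hm)

theorem IsPartition.card_le_two_of_mem_Pset (hw : FriendOriented w) (hP : IsPartition univ π)
    (hR : Robust (CIStable w) univ π 1) {v : α} (hv : v ∈ Pset w) : (π v).card ≤ 2 := by
  obtain ⟨L, hL, hvL⟩ := mem_Pset_iff.mp hv
  exact card_coalition_le_two_of_mem_removed hP (hL.coalition_eq_pair hw hP hR) hvL

end Pairs

/-- For `k = 1`, if a symmetric friend-oriented game admits a CIS-robust
partition, then every player of `R_w` is an isolated vertex of the friendship graph. -/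
theorem r_players_isolated {α : Type*} [DecidableEq α] [Fintype α]
    (w : α → α → ℤ) (hw : FriendOriented w)
    (hex : ∃ π : α → Finset α, IsPartition (Finset.univ : Finset α) π ∧
      Robust (CIStable w) Finset.univ π 1) :
    ∀ j ∈ Rset w, ∀ u : α, ¬ Friend w j u := by
  obtain ⟨π, hP, hR⟩ := hex
  intro j hj u hju
  have hjP : j ∉ Pset w := fun h => hj (Or.inl (Or.inl h))
  have hnotin : ∀ {v}, v ∈ Pset w → j ∉ π v := fun hv hjv =>
    hjP (hP.mem_Pset_of_mem_coalition hw hR hv hjv)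
  have hsing : π j = {j} := hP.eq_singleton_of_forall_not_friend hw hR.1 (mem_univ j)
    fun f hf hjf => hnotin (mem_Pset_of_friend_of_mem_Rset hw hj hjf)
      (by rw [hP.eq_of_mem (mem_univ j) hf]; exact hP.mem_self (mem_univ j))
  have huP := mem_Pset_of_friend_of_mem_Rset hw hj hju
  exact (hP.two_lt_card_of_friend hw hR (mem_univ j) hsing (mem_univ u) (hnotin huP) hju).not_ge
    (hP.card_le_two_of_mem_Pset hw hR huP)
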